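/- arXiv:1107.4680 — 2 statements merged into one kernel-verified Lean document; each statement's English description precedes it below -/
import Mathlib

section
/- The polyanalytic basis functions Φ_{j,k} satisfy the lowering relations (1/√π) ∂_z Φ_{j,k} = √k · Φ_{j,k−1} and (1/√π) ∂_{z̄} Φ_{j,k} = −√j · Φ_{j−1,k} (with the convention Φ_{j,−1} = Φ_{−1,k} = 0). -/
open MvPolynomial Real

noncomputable section

/-- Polynomials in the two commuting variables `z` (index `0`) and `z̄` (index `1`). -/
abbrev P2 : Type := MvPolynomial (Fin 2) ℂ

/-- Formal Wirtinger derivative `∂_z`. -/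
noncomputable def Dz : Module.End ℂ P2 := (pderiv (0 : Fin 2)).toLinearMap

/-- Formal Wirtinger derivative `∂_z̄`. -/
noncomputable def Dzb : Module.End ℂ P2 := (pderiv (1 : Fin 2)).toLinearMap

/-- Multiplication by `z`. -/
noncomputable def mulZ : Module.End ℂ P2 := LinearMap.mulLeft ℂ (X 0)

/-- Multiplication by `z̄`. -/
noncomputable def mulZb : Module.End ℂ P2 := LinearMap.mulLeft ℂ (X 1)

/-- The Laplacian `Δ_z = 4 ∂_z̄ ∂_z`. -/
noncomputable def Δz : Module.End ℂ P2 := (4 : ℂ) • (Dzb ∘ₗ Dz)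

/-- `e^{cΔ_z}` applied to a polynomial: a finite sum since `Δ_z` is locally nilpotent. -/
noncomputable def expDelta (c : ℂ) (p : P2) : P2 :=
  ∑ l ∈ Finset.range (p.totalDegree + 1), (c ^ l / (l.factorial : ℂ)) • ((Δz ^ l) p)

/-- `Φ_{j,k}(z,z̄) = (π^j j!)^{-1/2} Σ_{l=0}^j C(j,l) (-π z̄)^{j-l} ∂_z^l ((π^k/k!)^{1/2} z^k)`. -/
noncomputable def PhiJK (j k : ℕ) : P2 :=
  ((Real.sqrt (π ^ j * j.factorial) : ℂ))⁻¹ •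
    ∑ l ∈ Finset.range (j + 1), (j.choose l : ℂ) •
      ((C (-(π : ℂ)) * X 1) ^ (j - l) *
        ((Dz ^ l) ((Real.sqrt (π ^ k / k.factorial) : ℂ) • (X 0) ^ k)))

end

/-!
By the binomial theorem for the commuting operators `∂_z` and `-π z̄`,
`Φ_{j,k} = (π^j j!)^{-1/2} (∂_z - π z̄)^j e_k` with `e_k = (π^k/k!)^{1/2} z^k`.
The operator `∂_z` commutes with `∂_z - π z̄` and sends `e_k` to `√(πk) e_{k-1}`. The operator `∂_z̄`
kills `e_k` and satisfies the canonical commutation relation `[∂_z̄, ∂_z - π z̄] = -π`, whence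
`∂_z̄ (∂_z - π z̄)^j = (∂_z - π z̄)^j ∂_z̄ - π j (∂_z - π z̄)^{j-1}`, and
`(π^j j!)^{-1/2} π j = √π √j (π^{j-1} (j-1)!)^{-1/2}`.
-/

open LinearMap (mulLeft)

theorem mul_pow_eq_pow_mul_add_nsmul {R : Type*} [Semiring R] {a b c : R}
    (h : a * b = b * a + c) (hc : Commute b c) (n : ℕ) :
    a * b ^ n = b ^ n * a + n • (c * b ^ (n - 1)) := by
  obtain _ | n := n
  · simp
  simp only [Nat.add_sub_cancel]
  induction n with
  | zero => simp [h]
  | succ n ih =>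
    rw [pow_succ, ← mul_assoc, ih, add_mul, mul_assoc, h, mul_add, ← mul_assoc, ← pow_succ,
      smul_mul_assoc, mul_assoc, ← pow_succ, add_assoc, (hc.pow_left _).eq, succ_nsmul' _ (n + 1)]

theorem Derivation.toLinearMap_mul_mulLeft {R A : Type*} [CommSemiring R] [CommSemiring A]
    [Algebra R A] (D : Derivation R A A) (a : A) :
    (D : Module.End R A) * mulLeft R a = mulLeft R a * D + mulLeft R (D a) := by
  ext p
  simp [D.leibniz, mul_comm]

theorem MvPolynomial.commute_pderiv {R σ : Type*} [CommRing R] (i j : σ) :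
    Commute (pderiv i : Derivation R (MvPolynomial σ R) _).toLinearMap (pderiv j).toLinearMap := by
  classical
  have : ⁅pderiv i, pderiv j⁆ = (0 : Derivation R (MvPolynomial σ R) (MvPolynomial σ R)) :=
    derivation_ext fun k => by
      rw [Derivation.commutator_apply]
      simp [pderiv_X, Pi.single_apply, apply_ite]
  rw [commute_iff_lie_eq, ← Derivation.commutator_coe_linear_map, this]
  rfl

theorem Real.sqrt_pow_succ_mul_factorial_succ {x : ℝ} (hx : 0 ≤ x) (n : ℕ) :
    √(x ^ (n + 1) * (n + 1).factorial) = √x * √(n + 1) * √(x ^ n * n.factorial) := by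
  rw [← Real.sqrt_mul hx, ← Real.sqrt_mul (by positivity)]
  push_cast [Nat.factorial_succ, pow_succ]
  ring_nf

theorem Real.sqrt_pow_succ_div_factorial_succ_mul {x : ℝ} (hx : 0 ≤ x) (n : ℕ) :
    √(x ^ (n + 1) / (n + 1).factorial) * (n + 1) = √x * √(n + 1) * √(x ^ n / n.factorial) := by
  rw [← sq_eq_sq₀ (by positivity) (by positivity)]
  simp only [mul_pow, Real.sq_sqrt hx, Real.sq_sqrt (by positivity : (0 : ℝ) ≤ n + 1),
    Real.sq_sqrt (by positivity : (0 : ℝ) ≤ x ^ n / n.factorial),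
    Real.sq_sqrt (by positivity : (0 : ℝ) ≤ x ^ (n + 1) / (n + 1).factorial)]
  push_cast [Nat.factorial_succ, pow_succ]
  field_simp

noncomputable def raisingOp (c : ℂ) : Module.End ℂ P2 := Dz + mulLeft ℂ (C c * X 1)

noncomputable def normMonomial (k : ℕ) : P2 := (√(π ^ k / k.factorial) : ℂ) • X 0 ^ k

theorem commute_Dz_mulLeft (c : ℂ) : Commute Dz (mulLeft ℂ (C c * X 1 : P2)) := by
  rw [commute_iff_eq, Dz, Derivation.toLinearMap_mul_mulLeft]
  simp [pderiv_X]

theorem commute_Dz_raisingOp (c : ℂ) : Commute Dz (raisingOp c) :=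
  (Commute.refl Dz).add_right (commute_Dz_mulLeft c)

theorem Dzb_mul_raisingOp (c : ℂ) : Dzb * raisingOp c = raisingOp c * Dzb + c • 1 := by
  have hmul : Dzb * mulLeft ℂ (C c * X 1) = mulLeft ℂ (C c * X 1) * Dzb + c • 1 := by
    rw [Dzb, Derivation.toLinearMap_mul_mulLeft]
    congr 1
    ext p
    simp [pderiv_X, C_mul']
  rw [raisingOp, mul_add, add_mul, hmul, Dzb, Dz, (commute_pderiv 1 0).eq, add_assoc]

theorem PhiJK_eq_smul_raisingOp_pow (j k : ℕ) :
    PhiJK j k = (√(π ^ j * j.factorial) : ℂ)⁻¹ • (raisingOp (-π) ^ j) (normMonomial k) := by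
  rw [PhiJK, raisingOp, (commute_Dz_mulLeft _).add_pow, LinearMap.sum_apply]
  congr 1
  refine Finset.sum_congr rfl fun l _ => ?_
  rw [((commute_Dz_mulLeft _).pow_pow l (j - l)).eq, LinearMap.pow_mulLeft,
    Module.End.mul_apply, Module.End.mul_apply, Module.End.natCast_apply, map_nsmul, map_nsmul,
    LinearMap.mulLeft_apply, normMonomial, Nat.cast_smul_eq_nsmul]

theorem Dz_normMonomial (k : ℕ) :
    Dz (normMonomial k) = (√π * √k : ℂ) • normMonomial (k - 1) := by
  obtain _ | n := k
  · simp [normMonomial, Dz]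
  · have h := congrArg ((↑) : ℝ → ℂ) (Real.sqrt_pow_succ_div_factorial_succ_mul pi_pos.le n)
    push_cast at h
    simp only [normMonomial, Dz, Nat.add_sub_cancel, LinearMap.map_smul, Derivation.coeFn_coe,
      pderiv_pow, pderiv_X_self, mul_one, smul_smul]
    rw [← nsmul_eq_mul, ← Nat.cast_smul_eq_nsmul ℂ, smul_smul]
    push_cast
    rw [h]

theorem Dzb_normMonomial (k : ℕ) : Dzb (normMonomial k) = 0 := by
  simp [normMonomial, Dzb, pderiv_X]

theorem Dz_raisingOp_pow_normMonomial (c : ℂ) (j k : ℕ) :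
    Dz ((raisingOp c ^ j) (normMonomial k)) =
      (√π * √k : ℂ) • (raisingOp c ^ j) (normMonomial (k - 1)) := by
  rw [← Module.End.mul_apply, ((commute_Dz_raisingOp c).pow_right j).eq, Module.End.mul_apply,
    Dz_normMonomial, map_smul]

theorem Dzb_raisingOp_pow_normMonomial (c : ℂ) (j k : ℕ) :
    Dzb ((raisingOp c ^ j) (normMonomial k)) =
      (j * c) • (raisingOp c ^ (j - 1)) (normMonomial k) := by
  rw [← Module.End.mul_apply, mul_pow_eq_pow_mul_add_nsmul (Dzb_mul_raisingOp c)
    ((Commute.one_right _).smul_right c)]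
  simp [Dzb_normMonomial, smul_smul, ← Nat.cast_smul_eq_nsmul ℂ]

/-- The truncated subtractions `k - 1` and `j - 1` are harmless: at `k = 0` (resp. `j = 0`) the
coefficient `√0 = 0` encodes the convention `Φ_{j,-1} = Φ_{-1,k} = 0`. -/
theorem phiJK_lowering (j k : ℕ) :
    ((Real.sqrt π : ℂ))⁻¹ • Dz (PhiJK j k) = (Real.sqrt k : ℂ) • PhiJK j (k - 1) ∧
    ((Real.sqrt π : ℂ))⁻¹ • Dzb (PhiJK j k) = -((Real.sqrt j : ℂ)) • PhiJK (j - 1) k := by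
  have hπ : (√π : ℂ) ≠ 0 := by exact_mod_cast (Real.sqrt_pos.2 pi_pos).ne'
  simp only [PhiJK_eq_smul_raisingOp_pow, map_smul, Dz_raisingOp_pow_normMonomial,
    Dzb_raisingOp_pow_normMonomial, smul_smul]
  refine ⟨congrArg (· • _) ?_, congrArg (· • _) ?_⟩
  · field_simp
  · obtain _ | n := j
    · simp
    · have h := congrArg ((↑) : ℝ → ℂ) (Real.sqrt_pow_succ_mul_factorial_succ pi_pos.le n)
      push_cast at h ⊢
      rw [h]
      field_simp
      rw [← Complex.ofReal_pow, ← Complex.ofReal_pow, Real.sq_sqrt pi_pos.le,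
        Real.sq_sqrt (by positivity)]
      push_cast
      ring
end

section
/- The magnetic Laplacian L = z̄ ∂_{z̄} − (1/(4π)) Δ_z satisfies L Φ_{j,k} = j · Φ_{j,k} for all j, k ∈ ℕ₀, i.e., the polynomials Φ_{j,k} are eigenfunctions of L with eigenvalue j. -/
open MvPolynomial Real

/-! With the creation operator `B = ∂_z - π z̄`, the binomial theorem (`∂_z` commutes with `z̄`)
gives `Φ_{j,k} ∝ B^j z^k`, and `L = -π⁻¹ B ∂_z̄`. From `[∂_z̄, B] = -π` one gets
`∂_z̄ B^j = B^j ∂_z̄ - jπ B^(j-1)`, and `∂_z̄ z^k = 0`, so `L B^j z^k = j B^j z^k`. -/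

theorem mul_pow_succ_of_mul_eq_add {R : Type*} [Semiring R] {a b c : R}
    (hab : a * b = b * a + c) (hcb : Commute c b) (n : ℕ) :
    a * b ^ (n + 1) = b ^ (n + 1) * a + (n + 1) • (c * b ^ n) := by
  induction n with
  | zero => simp [hab]
  | succ n ih =>
    calc a * b ^ (n + 2) = (a * b ^ (n + 1)) * b := by rw [pow_succ _ (n + 1), mul_assoc]
      _ = b ^ (n + 1) * (a * b) + (n + 1) • (c * b ^ (n + 1)) := by
        rw [ih, add_mul, smul_mul_assoc, mul_assoc, mul_assoc, ← pow_succ]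
      _ = b ^ (n + 2) * a + (n + 2) • (c * b ^ (n + 1)) := by
        rw [hab, mul_add, ← mul_assoc, ← pow_succ, (hcb.pow_right (n + 1)).eq.symm, add_assoc,
          ← succ_nsmul']

theorem Module.End.mul_pow_apply_of_mul_eq_add_smul_one {R M : Type*} [CommSemiring R]
    [AddCommMonoid M] [Module R M] {A D : Module.End R M} {c : R}
    (h : D * A = A * D + c • 1) {f : M} (hf : D f = 0) (j : ℕ) :
    (A * D) ((A ^ j) f) = (j * c) • (A ^ j) f := by
  cases j with
  | zero => simp [hf]
  | succ n =>
    have hcomm := mul_pow_succ_of_mul_eq_add h ((Commute.one_left A).smul_left c) n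
    rw [Module.End.mul_apply, ← Module.End.mul_apply D, hcomm]
    simp only [LinearMap.add_apply, Module.End.mul_apply, hf, map_zero, zero_add,
      LinearMap.smul_apply, smul_mul_assoc, one_mul, pow_succ' A n]
    rw [map_nsmul, map_smul, ← Nat.cast_smul_eq_nsmul R, smul_smul]

theorem MvPolynomial.pderiv_pderiv_comm {R σ : Type*} [CommSemiring R] (i j : σ)
    (p : MvPolynomial σ R) : pderiv i (pderiv j p) = pderiv j (pderiv i p) := by
  classical
  induction p using MvPolynomial.induction_on' with
  | monomial s a =>
    rcases eq_or_ne i j with rfl | hij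
    · rfl
    simp only [pderiv_monomial, tsub_right_comm (a := s)]
    congr 1
    simp [Finsupp.tsub_apply, hij, hij.symm, mul_right_comm]
  | add p q hp hq => simp only [map_add, hp, hq]

noncomputable def creationOp : Module.End ℂ P2 := Dz - (π : ℂ) • mulZb

theorem commute_Dz_mulZb : Commute Dz mulZb :=
  LinearMap.ext fun p => by simp [Dz, mulZb]

theorem Dzb_mul_mulZb : Dzb * mulZb = mulZb * Dzb + 1 :=
  LinearMap.ext fun p => by simp [Dzb, mulZb, add_comm]

theorem commute_Dzb_Dz : Commute Dzb Dz :=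
  LinearMap.ext fun p => pderiv_pderiv_comm 1 0 p

theorem Dzb_mul_creationOp : Dzb * creationOp = creationOp * Dzb + (-(π : ℂ)) • 1 := by
  rw [creationOp, mul_sub, sub_mul, mul_smul_comm, smul_mul_assoc, Dzb_mul_mulZb,
    commute_Dzb_Dz.eq]
  module

theorem creationOp_eq_add_mulLeft :
    creationOp = Dz + LinearMap.mulLeft ℂ (C (-(π : ℂ)) * X 1) :=
  LinearMap.ext fun p => by simp [creationOp, mulZb, sub_eq_add_neg, smul_eq_C_mul, mul_assoc]

theorem magneticLaplacian_eq :
    mulZb ∘ₗ Dzb - (4 * (π : ℂ))⁻¹ • Δz = (-(π : ℂ)⁻¹) • (creationOp * Dzb) := by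
  have hπ : (π : ℂ) ≠ 0 := by exact_mod_cast pi_ne_zero
  rw [Δz, ← Module.End.mul_eq_comp, ← Module.End.mul_eq_comp, commute_Dzb_Dz.eq, creationOp,
    sub_mul, smul_mul_assoc]
  match_scalars <;> field_simp

theorem Dzb_smul_X_zero_pow (c : ℂ) (k : ℕ) : Dzb (c • X 0 ^ k) = 0 := by
  simp [Dzb]

theorem PhiJK_eq_smul_creationOp_pow (j k : ℕ) :
    PhiJK j k = ((Real.sqrt (π ^ j * j.factorial) : ℂ))⁻¹ •
      (creationOp ^ j) ((Real.sqrt (π ^ k / k.factorial) : ℂ) • X 0 ^ k) := by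
  have hcomm : Commute Dz (LinearMap.mulLeft ℂ (C (-(π : ℂ)) * X 1)) :=
    LinearMap.ext fun p => by simp [Dz]
  rw [PhiJK, creationOp_eq_add_mulLeft, hcomm.add_pow',
    Finset.Nat.sum_antidiagonal_eq_sum_range_succ (fun a b => j.choose a • (Dz ^ a * _ ^ b)),
    LinearMap.sum_apply]
  congr 1
  refine Finset.sum_congr rfl fun l _ => ?_
  rw [LinearMap.smul_apply, (hcomm.pow_pow _ _).eq, Module.End.mul_apply, LinearMap.pow_mulLeft,
    LinearMap.mulLeft_apply, Nat.cast_smul_eq_nsmul]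

/-- The magnetic Laplacian `L = z̄ ∂_z̄ - (1/(4π)) Δ_z` satisfies
`L Φ_{j,k} = j Φ_{j,k}`. -/
theorem phiJK_eigenfunction (j k : ℕ) :
    (mulZb ∘ₗ Dzb - (4 * (π : ℂ))⁻¹ • Δz) (PhiJK j k) = (j : ℂ) • PhiJK j k := by
  have hπ : (π : ℂ) ≠ 0 := by exact_mod_cast pi_ne_zero
  rw [PhiJK_eq_smul_creationOp_pow, map_smul, magneticLaplacian_eq, LinearMap.smul_apply,
    Module.End.mul_pow_apply_of_mul_eq_add_smul_one Dzb_mul_creationOp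
      (Dzb_smul_X_zero_pow _ k), smul_smul (-(π : ℂ)⁻¹), smul_comm (j : ℂ)]
  congr 2
  field_simp
end
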